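/- arXiv:1301.7567 — 4 statements merged into one kernel-verified Lean document; each statement's English description precedes it below -/
import Mathlib

section
/- Let P and Q be probability measures on a measurable space with Q ≪ P, and let T be a measurable map to another measurable space. Then the Kullback–Leibler divergence between the pushforward measures satisfies KL(T_*P, T_*Q) ≤ KL(P, Q). -/
open MeasureTheory
open scoped ENNReal Classical

/-! Mathlib's `InformationTheory.klDiv` adds the correction `ν(univ) - μ(univ)` to the integral of
the log-likelihood ratio, so it agrees with `klDiv` on measures of equal total mass, and the
data-processing inequality `InformationTheory.klDiv_map_le` (Jensen's inequality for the
conditional expectation of `dμ/dν` given `T`) transfers. -/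

/-- The Kullback–Leibler divergence `KL(P,Q) = E_P[log dP/dQ]` when `P ≪ Q` and the
log-likelihood ratio is `P`-integrable, and `+∞` otherwise. -/

noncomputable def klDiv {α : Type*} [MeasurableSpace α] (P Q : Measure α) : ℝ≥0∞ :=
  if P ≪ Q ∧ Integrable (llr P Q) P then ENNReal.ofReal (∫ x, llr P Q x ∂P) else ⊤

theorem klDiv_eq_informationTheory_klDiv {α : Type*} [MeasurableSpace α] {μ ν : Measure α}
    (h : μ Set.univ = ν Set.univ) : klDiv μ ν = InformationTheory.klDiv μ ν := by
  by_cases hc : μ ≪ ν ∧ Integrable (llr μ ν) μ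
  · rw [klDiv, if_pos hc, InformationTheory.klDiv_of_ac_of_integrable hc.1 hc.2, Measure.real,
      Measure.real, h, add_sub_cancel_right]
  · rw [klDiv, if_neg hc, eq_comm, InformationTheory.klDiv_eq_top_iff]
    exact fun hac hint ↦ hc ⟨hac, hint⟩

/-- Data-processing inequality for the Kullback–Leibler divergence: for probability
measures `P, Q` with `Q ≪ P` and a measurable map `T`,
`KL(T_*P, T_*Q) ≤ KL(P, Q)`. -/
theorem klDiv_map_le {α β : Type*} [MeasurableSpace α] [MeasurableSpace β]
    (P Q : Measure α) [IsProbabilityMeasure P] [IsProbabilityMeasure Q]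
    (T : α → β) (hT : Measurable T) :
    klDiv (P.map T) (Q.map T) ≤ klDiv P Q := by
  have h_univ : P Set.univ = Q Set.univ := by simp
  have h_map_univ : P.map T Set.univ = Q.map T Set.univ := by
    rw [Measure.map_apply hT MeasurableSet.univ, Measure.map_apply hT MeasurableSet.univ,
      Set.preimage_univ, h_univ]
  rw [klDiv_eq_informationTheory_klDiv h_map_univ, klDiv_eq_informationTheory_klDiv h_univ]
  exact InformationTheory.klDiv_map_le P Q hT
end

section
/- Let (X_i) be a stationary ergodic Markov chain with transition densities p_b(x,y) and invariant density π_b, indexed by b in a measurable parameter set 𝓑 with prior Π. Let L_n(b) = (π_b(X_0)/π_{b_0}(X_0)) ∏_{i=1}^n p_b(X_{i-1}, X_i)/p_{b_0}(X_{i-1}, X_i) denote the likelihood ratio. Suppose Π(b : KL(b_0, b) < ε) > 0 for every ε > 0, where KL(b_0, b) is the Kullback–Leibler divergence between the transition kernels averaged over the invariant measure, and suppose (1/n) log L_n(b) → −KL(b_0, b) almost surely for each b. If measurable sets C_n ⊂ 𝓑 satisfy e^{nc} ∫_{C_n} L_n(b) Π(db) → 0 almost surely for some c > 0, then the posterior probability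 Π(C_n | X_0, …, X_n) = ∫_{C_n} L_n dΠ / ∫_𝓑 L_n dΠ → 0 almost surely. -/
open MeasureTheory Filter Real Topology

/-! On the KL-neighbourhood `{b | KL b < c}`, which has positive prior mass, the integrand
`e^{nc} L_n(b)` tends to infinity because `(1/n) log L_n(b) → -KL b > -c`, so by Fatou's lemma
`e^{nc} ∫ L_n dΠ → ∞`. Multiplying numerator and denominator of the posterior mass by `e^{nc}`
exhibits it as a quotient of a null sequence by one tending to infinity. Joint measurability of
`L_n` is what allows trading "for every `b`, almost surely" for "almost surely, for `Π`-a.e. `b`". -/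

lemma tendsto_exp_mul_mul_atTop_of_tendsto_log_div {x : ℕ → ℝ} (hx : ∀ n, 0 < x n) {ℓ c : ℝ}
    (h : Tendsto (fun n : ℕ => log (x n) / n) atTop (𝓝 ℓ)) (hℓ : -c < ℓ) :
    Tendsto (fun n : ℕ => exp (n * c) * x n) atTop atTop := by
  have hlin : Tendsto (fun n : ℕ => (n : ℝ) * (c + log (x n) / n)) atTop atTop :=
    tendsto_natCast_atTop_atTop.atTop_mul_pos (by linarith) (tendsto_const_nhds.add h)
  refine (tendsto_exp_atTop.comp hlin).congr' ?_
  filter_upwards [eventually_ne_atTop 0] with n hn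
  rw [Function.comp_apply, mul_add, mul_div_cancel₀ _ (Nat.cast_ne_zero.2 hn), exp_add,
    exp_log (hx n)]

section Integral

variable {α : Type*} [MeasurableSpace α] {μ : Measure α}

lemma tendsto_integral_atTop_of_ae_tendsto_atTop [NeZero μ] {g : ℕ → α → ℝ}
    (hg : ∀ n, Integrable (g n) μ) (hg0 : ∀ n, 0 ≤ᵐ[μ] g n)
    (hlim : ∀ᵐ a ∂μ, Tendsto (fun n => g n a) atTop atTop) :
    Tendsto (fun n => ∫ a, g n a ∂μ) atTop atTop := by
  rw [← ENNReal.tendsto_ofReal_nhds_top]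
  simp_rw [ofReal_integral_eq_lintegral_ofReal (hg _) (hg0 _)]
  have hliminf : ∫⁻ a, liminf (fun n => ENNReal.ofReal (g n a)) atTop ∂μ = ⊤ := by
    rw [lintegral_congr_ae (g := fun _ => ⊤), lintegral_const, ENNReal.top_mul (NeZero.ne _)]
    filter_upwards [hlim] with a ha using (ENNReal.tendsto_ofReal_nhds_top.2 ha).liminf_eq
  have hfatou := lintegral_liminf_le' (μ := μ) (u := atTop)
    fun n => (hg n).aemeasurable.ennreal_ofReal
  rw [hliminf, top_le_iff] at hfatou
  exact tendsto_order.2 ⟨fun b hb => eventually_lt_of_lt_liminf (hfatou ▸ hb),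
    fun b hb => absurd hb not_top_lt⟩

lemma tendsto_exp_mul_integral_atTop {f : ℕ → α → ℝ} {ℓ : α → ℝ} (hℓ : Measurable ℓ) {c : ℝ}
    (hneighb : μ {a | -c < ℓ a} ≠ 0) (hf : ∀ n a, 0 < f n a) (hint : ∀ n, Integrable (f n) μ)
    (hlim : ∀ᵐ a ∂μ, Tendsto (fun n : ℕ => log (f n a) / n) atTop (𝓝 (ℓ a))) :
    Tendsto (fun n : ℕ => exp (n * c) * ∫ a, f n a ∂μ) atTop atTop := by
  set A := {a | -c < ℓ a}
  have hA : MeasurableSet A := measurableSet_lt measurable_const hℓ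
  have : NeZero (μ.restrict A) := ⟨by simpa [Measure.restrict_eq_zero] using hneighb⟩
  have hlimA : Tendsto (fun n : ℕ => ∫ a in A, exp (n * c) * f n a ∂μ) atTop atTop := by
    refine tendsto_integral_atTop_of_ae_tendsto_atTop (fun n => (hint n).restrict.const_mul _)
      (fun n => ae_of_all _ fun a => (mul_pos (exp_pos _) (hf n a)).le) ?_
    rw [ae_restrict_iff' hA]
    filter_upwards [hlim] with a ha haA
    exact tendsto_exp_mul_mul_atTop_of_tendsto_log_div (hf · a) ha haA
  refine tendsto_atTop_mono (fun n => ?_) hlimA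
  rw [integral_const_mul]
  exact mul_le_mul_of_nonneg_left
    (setIntegral_le_integral (hint n) (ae_of_all _ fun a => (hf n a).le)) (exp_pos _).le

end Integral

theorem posterior_mass_tendsto_zero_general
    {Ω 𝓑 : Type*} [MeasurableSpace Ω] [MeasurableSpace 𝓑]
    (P : Measure Ω) [IsProbabilityMeasure P]
    (Pri : Measure 𝓑) [IsProbabilityMeasure Pri]
    (KL : 𝓑 → ℝ) (hKLmeas : Measurable KL)
    (L : ℕ → 𝓑 → Ω → ℝ)
    (hLmeas : ∀ n, Measurable (Function.uncurry (L n)))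
    (hLpos : ∀ n b ω, 0 < L n b ω)
    (hLint : ∀ n, ∀ᵐ ω ∂P, Integrable (fun b => L n b ω) Pri)
    (hprior : ∀ ε : ℝ, 0 < ε → 0 < Pri {b | KL b < ε})
    (hLLN : ∀ b, ∀ᵐ ω ∂P,
      Tendsto (fun n : ℕ => Real.log (L n b ω) / n) atTop (nhds (-(KL b))))
    (C : ℕ → Set 𝓑)
    (c : ℝ) (hc : 0 < c)
    (hnum : ∀ᵐ ω ∂P,
      Tendsto (fun n : ℕ => Real.exp (n * c) * ∫ b in C n, L n b ω ∂Pri) atTop (nhds 0)) :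
    ∀ᵐ ω ∂P,
      Tendsto (fun n : ℕ => (∫ b in C n, L n b ω ∂Pri) / ∫ b, L n b ω ∂Pri)
        atTop (nhds 0) := by
  have hLLN_set : MeasurableSet {p : Ω × 𝓑 |
      Tendsto (fun n : ℕ => log (L n p.2 p.1) / n) atTop (𝓝 (-KL p.2))} :=
    measurableSet_tendsto_fun (fun n => ((hLmeas n).comp measurable_swap).log.div_const _)
      (hKLmeas.comp measurable_snd).neg
  have hLLN_ae : ∀ᵐ ω ∂P, ∀ᵐ b ∂Pri,
      Tendsto (fun n : ℕ => log (L n b ω) / n) atTop (𝓝 (-KL b)) :=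
    (Measure.ae_ae_comm hLLN_set).2 (ae_of_all _ hLLN)
  have hneighb : Pri {b | -c < -KL b} ≠ 0 := by
    simpa only [neg_lt_neg_iff] using (hprior c hc).ne'
  filter_upwards [hLLN_ae, ae_all_iff.2 hLint, hnum] with ω hLLNω hintω hnumω
  have hden := tendsto_exp_mul_integral_atTop hKLmeas.neg hneighb (fun n b => hLpos n b ω)
    hintω hLLNω
  refine (hnumω.div_atTop hden).congr fun n => ?_
  exact mul_div_mul_left _ _ (exp_pos _).ne'

/-- Posterior consistency lemma for Markov chain models (Lemma 5.2): if the prior puts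
positive mass on all Kullback–Leibler neighborhoods of the truth, the normalized
log-likelihood ratio converges a.s. to minus the KL divergence, and the numerator
`∫_{C_n} L_n dΠ` decays faster than `e^{-nc}` a.s. for some `c > 0`, then the posterior
mass of `C_n` tends to `0` almost surely. -/
theorem posterior_mass_tendsto_zero
    {Ω 𝓑 : Type*} [MeasurableSpace Ω] [MeasurableSpace 𝓑]
    (P : Measure Ω) [IsProbabilityMeasure P]
    (Pri : Measure 𝓑) [IsProbabilityMeasure Pri]
    (KL : 𝓑 → ℝ) (hKLmeas : Measurable KL) (hKL0 : ∀ b, 0 ≤ KL b)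
    (L : ℕ → 𝓑 → Ω → ℝ)
    (hLmeas : ∀ n, Measurable (Function.uncurry (L n)))
    (hLpos : ∀ n b ω, 0 < L n b ω)
    (hLint : ∀ n, ∀ᵐ ω ∂P, Integrable (fun b => L n b ω) Pri)
    (hprior : ∀ ε : ℝ, 0 < ε → 0 < Pri {b | KL b < ε})
    (hLLN : ∀ b, ∀ᵐ ω ∂P,
      Tendsto (fun n : ℕ => Real.log (L n b ω) / n) atTop (nhds (-(KL b))))
    (C : ℕ → Set 𝓑) (hC : ∀ n, MeasurableSet (C n))
    (c : ℝ) (hc : 0 < c)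
    (hnum : ∀ᵐ ω ∂P,
      Tendsto (fun n : ℕ => Real.exp (n * c) * ∫ b in C n, L n b ω ∂Pri) atTop (nhds 0)) :
    ∀ᵐ ω ∂P,
      Tendsto (fun n : ℕ => (∫ b in C n, L n b ω ∂Pri) / ∫ b, L n b ω ∂Pri)
        atTop (nhds 0) :=
  posterior_mass_tendsto_zero_general P Pri KL hKLmeas L hLmeas hLpos hLint hprior hLLN C c hc hnum
end

section
/- Suppose (1/n) log L_n(b) → −K(b) almost surely for each b, where K(b) ≥ 0, and suppose Π(b : K(b) < η) > 0 for every η > 0. Then almost surely, for every α > 0, liminf_{n→∞} e^{nα} ∫ L_n(b) Π(db) ≥ Π(b : K(b) < α) > 0; in particular e^{nα} ∫ L_n dΠ does not converge to 0. -/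
open MeasureTheory Filter

/-! On the event where `(1/n) log L_n(b) → -K(b)` for `Π`-almost every `b` (an event of full
probability, by Fubini), every `b` with `K(b) < α` has `e^{nα} L_n(b) → ∞`. Fatou's lemma applied
to `e^{nα} L_n` then bounds `liminf e^{nα} ∫ L_n dΠ` below by `∫ 𝟙{K < α} · ∞ dΠ ≥ Π(K < α)`. -/

theorem ae_ae_tendsto_of_forall_ae_tendsto {Ω 𝓑 : Type*} [MeasurableSpace Ω]
    [MeasurableSpace 𝓑] {P : Measure Ω} {μ : Measure 𝓑} [SFinite P] [SFinite μ]
    {f : ℕ → 𝓑 → Ω → ℝ} {g : 𝓑 → ℝ} (hf : ∀ n, Measurable (Function.uncurry (f n)))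
    (hg : Measurable g) (h : ∀ b, ∀ᵐ ω ∂P, Tendsto (fun n => f n b ω) atTop (nhds (g b))) :
    ∀ᵐ ω ∂P, ∀ᵐ b ∂μ, Tendsto (fun n => f n b ω) atTop (nhds (g b)) := by
  have hset : MeasurableSet {x : 𝓑 × Ω | Tendsto (fun n => f n x.1 x.2) atTop (nhds (g x.1))} :=
    measurableSet_tendsto_fun hf (hg.comp measurable_fst)
  rw [← Measure.ae_ae_comm hset]
  exact Eventually.of_forall h

theorem tendsto_exp_mul_mul_atTop_of_tendsto_log_div_s6 {x : ℕ → ℝ} {k α : ℝ}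
    (hx : ∀ n, 0 < x n) (hlog : Tendsto (fun n : ℕ => Real.log (x n) / n) atTop (nhds (-k)))
    (hkα : k < α) :
    Tendsto (fun n : ℕ => Real.exp (n * α) * x n) atTop atTop := by
  have hrate : Tendsto (fun n : ℕ => (n : ℝ) * (α + Real.log (x n) / n)) atTop atTop := by
    refine Tendsto.atTop_mul_pos (sub_pos.mpr hkα) tendsto_natCast_atTop_atTop ?_
    simpa [sub_eq_add_neg] using hlog.const_add α
  have hexponent : Tendsto (fun n : ℕ => n * α + Real.log (x n)) atTop atTop := by
    refine hrate.congr' ?_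
    filter_upwards [eventually_ne_atTop 0] with n hn
    field_simp
  refine (Real.tendsto_exp_atTop.comp hexponent).congr fun n => ?_
  simp only [Function.comp_apply, Real.exp_add, Real.exp_log (hx n)]

theorem measure_le_liminf_lintegral_of_tendsto_top {𝓑 : Type*} [MeasurableSpace 𝓑]
    {μ : Measure 𝓑} {f : ℕ → 𝓑 → ENNReal} {s : Set 𝓑} (hs : MeasurableSet s)
    (hf : ∀ n, AEMeasurable (f n) μ)
    (htop : ∀ᵐ b ∂μ, b ∈ s → Tendsto (fun n => f n b) atTop (nhds ⊤)) :
    μ s ≤ atTop.liminf (fun n => ∫⁻ b, f n b ∂μ) :=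
  calc μ s = ∫⁻ b, s.indicator 1 b ∂μ := (lintegral_indicator_one hs).symm
    _ ≤ ∫⁻ b, atTop.liminf (fun n => f n b) ∂μ := by
      refine lintegral_mono_ae ?_
      filter_upwards [htop] with b hb
      by_cases hbs : b ∈ s
      · simp [(hb hbs).liminf_eq]
      · simp [hbs]
    _ ≤ atTop.liminf (fun n => ∫⁻ b, f n b ∂μ) := lintegral_liminf_le' hf

theorem not_tendsto_zero_of_pos_le_liminf {u : ℕ → ENNReal} {c : ENNReal} (hc : 0 < c)
    (hle : c ≤ atTop.liminf u) : ¬ Tendsto u atTop (nhds 0) := fun h0 => by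
  rw [h0.liminf_eq] at hle
  exact hc.ne' (le_zero_iff.mp hle)

theorem liminf_exp_integral_likelihood_general
    {Ω 𝓑 : Type*} [MeasurableSpace Ω] [MeasurableSpace 𝓑]
    (P : Measure Ω) [IsProbabilityMeasure P]
    (Pri : Measure 𝓑) [IsProbabilityMeasure Pri]
    (K : 𝓑 → ℝ) (hKmeas : Measurable K)
    (L : ℕ → 𝓑 → Ω → ℝ)
    (hLmeas : ∀ n, Measurable (Function.uncurry (L n)))
    (hLpos : ∀ n b ω, 0 < L n b ω)
    (hLLN : ∀ b, ∀ᵐ ω ∂P,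
      Tendsto (fun n : ℕ => Real.log (L n b ω) / n) atTop (nhds (-(K b))))
    (hprior : ∀ η : ℝ, 0 < η → 0 < Pri {b | K b < η}) :
    ∀ᵐ ω ∂P, ∀ α : ℝ, 0 < α →
      (Pri {b | K b < α}
          ≤ atTop.liminf (fun n : ℕ =>
              ENNReal.ofReal (Real.exp (n * α)) * ∫⁻ b, ENNReal.ofReal (L n b ω) ∂Pri)
        ∧ 0 < Pri {b | K b < α}
        ∧ ¬ Tendsto (fun n : ℕ =>
              ENNReal.ofReal (Real.exp (n * α)) * ∫⁻ b, ENNReal.ofReal (L n b ω) ∂Pri)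
            atTop (nhds 0)) := by
  have hLLN_ae := ae_ae_tendsto_of_forall_ae_tendsto (μ := Pri)
    (fun n => (hLmeas n).log.div_const _) hKmeas.neg hLLN
  filter_upwards [hLLN_ae] with ω hω α hα
  have hLω : ∀ n, Measurable fun b => ENNReal.ofReal (L n b ω) := fun n =>
    ENNReal.measurable_ofReal.comp ((hLmeas n).comp (measurable_id.prodMk measurable_const))
  have hfatou : Pri {b | K b < α} ≤ atTop.liminf (fun n : ℕ =>
      ∫⁻ b, ENNReal.ofReal (Real.exp (n * α)) * ENNReal.ofReal (L n b ω) ∂Pri) := by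
    refine measure_le_liminf_lintegral_of_tendsto_top (hKmeas measurableSet_Iio)
      (fun n => ((hLω n).const_mul _).aemeasurable) ?_
    filter_upwards [hω] with b hb hbα
    simpa only [Function.comp_def, ← ENNReal.ofReal_mul (Real.exp_nonneg _)] using ENNReal.tendsto_ofReal_atTop.comp
      (tendsto_exp_mul_mul_atTop_of_tendsto_log_div_s6 (hLpos · b ω) hb hbα)
  simp only [lintegral_const_mul _ (hLω _)] at hfatou
  exact ⟨hfatou, hprior α hα, not_tendsto_zero_of_pos_le_liminf (hprior α hα) hfatou⟩

/-- If `(1/n) log L_n(b) → -K(b)` a.s. for each `b`, with `K ≥ 0`, and the prior puts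
positive mass on `{K < η}` for every `η > 0`, then almost surely, for every `α > 0`,
`liminf e^{nα} ∫ L_n dΠ ≥ Π(K < α) > 0`; in particular `e^{nα} ∫ L_n dΠ` does not
converge to `0`. -/
theorem liminf_exp_integral_likelihood
    {Ω 𝓑 : Type*} [MeasurableSpace Ω] [MeasurableSpace 𝓑]
    (P : Measure Ω) [IsProbabilityMeasure P]
    (Pri : Measure 𝓑) [IsProbabilityMeasure Pri]
    (K : 𝓑 → ℝ) (hKmeas : Measurable K) (hK0 : ∀ b, 0 ≤ K b)
    (L : ℕ → 𝓑 → Ω → ℝ)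
    (hLmeas : ∀ n, Measurable (Function.uncurry (L n)))
    (hLpos : ∀ n b ω, 0 < L n b ω)
    (hLLN : ∀ b, ∀ᵐ ω ∂P,
      Tendsto (fun n : ℕ => Real.log (L n b ω) / n) atTop (nhds (-(K b))))
    (hprior : ∀ η : ℝ, 0 < η → 0 < Pri {b | K b < η}) :
    ∀ᵐ ω ∂P, ∀ α : ℝ, 0 < α →
      (Pri {b | K b < α}
          ≤ atTop.liminf (fun n : ℕ =>
              ENNReal.ofReal (Real.exp (n * α)) * ∫⁻ b, ENNReal.ofReal (L n b ω) ∂Pri)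
        ∧ 0 < Pri {b | K b < α}
        ∧ ¬ Tendsto (fun n : ℕ =>
              ENNReal.ofReal (Real.exp (n * α)) * ∫⁻ b, ENNReal.ofReal (L n b ω) ∂Pri)
            atTop (nhds 0)) :=
  liminf_exp_integral_likelihood_general P Pri K hKmeas L hLmeas hLpos hLLN hprior
end

section
/- Let (D_n) be a nonnegative integrable stochastic process adapted to a filtration (𝓕_n) satisfying E[D_{n+1} | 𝓕_n] ≤ D_n (1 − κ 1_{A_n}) for some constant 0 < κ < 1 and events A_n ∈ 𝓕_n. Suppose (1/n) ∑_{i=1}^{n-1} 1_{A_i} → c > 0 almost surely. Then for every 0 < ρ < −c·log(1−κ), we have e^{nρ} D_n → 0 almost surely. -/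
/-!
Write `S_n = #{i < n | ω ∈ A i}`. The drift condition says exactly that
`M_n = (1 - κ)^{-S_n} D_n` is a supermartingale; being nonnegative, it is bounded in `L¹` and
converges almost surely. Since `S_n / n → c`, the factor `e^{nρ} (1 - κ)^{S_n}` tends to zero as
soon as `ρ < -c log (1 - κ)`, and `e^{nρ} D_n` is its product with `M_n`.
-/

open MeasureTheory Filter Finset Topology

namespace MeasureTheory

variable {Ω : Type*} {m : MeasurableSpace Ω} {μ : Measure Ω} {ℱ : Filtration ℕ m}

theorem Supermartingale.exists_ae_tendsto_of_nonneg [IsFiniteMeasure μ] {f : ℕ → Ω → ℝ}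
    (hf : Supermartingale f ℱ μ) (hf0 : ∀ n, 0 ≤ᵐ[μ] f n) :
    ∀ᵐ ω ∂μ, ∃ l, Tendsto (fun n => f n ω) atTop (𝓝 l) := by
  have hnorm (n : ℕ) : eLpNorm (f n) 1 μ = ENNReal.ofReal (∫ ω, f n ω ∂μ) := by
    rw [eLpNorm_one_eq_lintegral_enorm,
      ofReal_integral_eq_lintegral_ofReal (hf.integrable n) (hf0 n)]
    refine lintegral_congr_ae ?_
    filter_upwards [hf0 n] with ω hω using Real.enorm_of_nonneg hω
  have hbdd (n : ℕ) : eLpNorm ((-f) n) 1 μ ≤ (∫ ω, f 0 ω ∂μ).toNNReal := by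
    rw [Pi.neg_apply, eLpNorm_neg, hnorm]
    exact ENNReal.ofReal_le_ofReal (by simpa using hf.setIntegral_le n.zero_le MeasurableSet.univ)
  filter_upwards [hf.neg.exists_ae_tendsto_of_bdd hbdd] with ω ⟨l, hl⟩
  exact ⟨-l, by simpa using hl.neg⟩

theorem supermartingale_mul_of_condExp_le [IsFiniteMeasure μ] {D W : ℕ → Ω → ℝ}
    (hD : StronglyAdapted ℱ D) (hDint : ∀ n, Integrable (D n) μ)
    (hW : StronglyAdapted ℱ W) (hWpred : ∀ n, StronglyMeasurable[ℱ n] (W (n + 1)))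
    (hWbdd : ∀ n, ∃ C, ∀ ω, ‖W n ω‖ ≤ C)
    (hdrift : ∀ n, W (n + 1) * μ[D (n + 1) | ℱ n] ≤ᵐ[μ] W n * D n) :
    Supermartingale (W * D) ℱ μ := by
  refine supermartingale_nat (fun n => (hW n).mul (hD n)) (fun n => ?_) fun n => ?_
  · obtain ⟨C, hC⟩ := hWbdd n
    exact (hDint n).bdd_mul ((hW n).mono (ℱ.le n)).aestronglyMeasurable (ae_of_all _ hC)
  · obtain ⟨C, hC⟩ := hWbdd (n + 1)
    exact (condExp_stronglyMeasurable_mul_of_bound (ℱ.le n) (hWpred n) (hDint (n + 1)) C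
      (ae_of_all _ hC)).trans_le (hdrift n)

end MeasureTheory

section OccupationCount

variable {Ω : Type*} (A : ℕ → Set Ω)

noncomputable def occupationCount (n : ℕ) (ω : Ω) : ℝ :=
  ∑ i ∈ range n, (A i).indicator (fun _ => (1 : ℝ)) ω

theorem occupationCount_succ (n : ℕ) (ω : Ω) :
    occupationCount A (n + 1) ω = occupationCount A n ω + (A n).indicator (fun _ => 1) ω :=
  sum_range_succ _ _

theorem occupationCount_nonneg (n : ℕ) (ω : Ω) : 0 ≤ occupationCount A n ω :=
  sum_nonneg fun _ _ => Set.indicator_nonneg (fun _ _ => zero_le_one) ω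

theorem occupationCount_le (n : ℕ) (ω : Ω) : occupationCount A n ω ≤ n := by
  calc occupationCount A n ω ≤ ∑ _ ∈ range n, (1 : ℝ) :=
        sum_le_sum fun _ _ => Set.indicator_le_self' (fun _ _ => zero_le_one) ω
    _ = n := by simp

theorem measurable_occupationCount {m : MeasurableSpace Ω} {ℱ : Filtration ℕ m}
    (hA : ∀ n, MeasurableSet[ℱ n] (A n)) {k n : ℕ} (hk : k ≤ n + 1) :
    Measurable[ℱ n] (occupationCount A k) :=
  Finset.measurable_sum _ fun i hi =>
    measurable_const.indicator (ℱ.mono (by grind) _ (hA i))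

theorem tendsto_occupationCount_div {c : ℝ} {ω : Ω}
    (h : Tendsto (fun n : ℕ => (∑ i ∈ Ico 1 n, (A i).indicator (fun _ => (1 : ℝ)) ω) / n)
      atTop (𝓝 c)) :
    Tendsto (fun n : ℕ => occupationCount A n ω / n) atTop (𝓝 c) := by
  have := (tendsto_const_div_atTop_nhds_zero_nat ((A 0).indicator (fun _ => (1 : ℝ)) ω)).add h
  rw [zero_add] at this
  refine this.congr' ?_
  filter_upwards [eventually_gt_atTop 0] with n hn
  rw [occupationCount, sum_range_eq_add_Ico _ hn, add_div]

end OccupationCount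

theorem tendsto_natCast_mul_add_atBot_of_tendsto_div {s : ℕ → ℝ} {c ρ L : ℝ}
    (hs : Tendsto (fun n : ℕ => s n / n) atTop (𝓝 c)) (h : ρ + L * c < 0) :
    Tendsto (fun n : ℕ => n * ρ + L * s n) atTop atBot := by
  refine (tendsto_natCast_atTop_atTop.atTop_mul_neg h
    (tendsto_const_nhds.add (hs.const_mul L))).congr' ?_
  filter_upwards [eventually_gt_atTop 0] with n hn
  field_simp

section Rescaling

variable {Ω : Type*} (A : ℕ → Set Ω) {κ : ℝ}

theorem exp_neg_log_mul_occupationCount_succ_mul (hκ : κ < 1) (n : ℕ) (ω : Ω) :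
    Real.exp (-Real.log (1 - κ) * occupationCount A (n + 1) ω)
        * (1 - κ * (A n).indicator (fun _ => 1) ω)
      = Real.exp (-Real.log (1 - κ) * occupationCount A n ω) := by
  rw [occupationCount_succ]
  by_cases hω : ω ∈ A n
  · have h1κ : 0 < 1 - κ := by linarith
    rw [Set.indicator_of_mem hω, mul_one, mul_add, mul_one, Real.exp_add, mul_assoc, Real.exp_neg,
      Real.exp_log h1κ, inv_mul_cancel₀ h1κ.ne', mul_one]
  · simp [Set.indicator_of_notMem hω]

variable {m : MeasurableSpace Ω} {μ : Measure Ω} {ℱ : Filtration ℕ m}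

theorem supermartingale_exp_mul_occupationCount [IsFiniteMeasure μ] {D : ℕ → Ω → ℝ}
    (hD : StronglyAdapted ℱ D) (hDint : ∀ n, Integrable (D n) μ)
    (hA : ∀ n, MeasurableSet[ℱ n] (A n)) (hκ : κ < 1)
    (hdrift : ∀ n, μ[D (n + 1) | ℱ n]
        ≤ᵐ[μ] fun ω => D n ω * (1 - κ * (A n).indicator (fun _ => (1 : ℝ)) ω)) :
    Supermartingale
      (fun n ω => Real.exp (-Real.log (1 - κ) * occupationCount A n ω) * D n ω) ℱ μ := by
  have hW {k n : ℕ} (hk : k ≤ n + 1) : StronglyMeasurable[ℱ n]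
      (fun ω => Real.exp (-Real.log (1 - κ) * occupationCount A k ω)) :=
    (Real.measurable_exp.comp
      ((measurable_occupationCount A hA hk).const_mul _)).stronglyMeasurable
  refine supermartingale_mul_of_condExp_le hD hDint (fun n => hW n.le_succ) (fun n => hW le_rfl)
    (fun n => ⟨Real.exp (|Real.log (1 - κ)| * n), fun ω => ?_⟩) fun n => ?_
  · rw [Real.norm_of_nonneg (Real.exp_nonneg _), Real.exp_le_exp]
    nlinarith [neg_le_abs (Real.log (1 - κ)), abs_nonneg (Real.log (1 - κ)),
      occupationCount_nonneg A n ω, occupationCount_le A n ω]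
  · filter_upwards [hdrift n] with ω hω
    rw [Pi.mul_apply, Pi.mul_apply]
    calc _ ≤ Real.exp (-Real.log (1 - κ) * occupationCount A (n + 1) ω)
          * (D n ω * (1 - κ * (A n).indicator (fun _ => 1) ω)) :=
          mul_le_mul_of_nonneg_left hω (Real.exp_nonneg _)
      _ = _ := by
        rw [mul_left_comm, exp_neg_log_mul_occupationCount_succ_mul A hκ, mul_comm]

end Rescaling

theorem exp_decay_of_supermartingale_general
    {Ω : Type*} {m : MeasurableSpace Ω} (μ : Measure Ω) [IsProbabilityMeasure μ]
    (ℱ : Filtration ℕ m) (D : ℕ → Ω → ℝ)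
    (hadapt : StronglyAdapted ℱ D) (hD0 : ∀ n ω, 0 ≤ D n ω)
    (hDint : ∀ n, Integrable (D n) μ)
    (A : ℕ → Set Ω) (hA : ∀ n, MeasurableSet[ℱ n] (A n))
    (κ : ℝ) (hκ1 : κ < 1)
    (hsuper : ∀ n, μ[D (n + 1) | ℱ n]
        ≤ᵐ[μ] fun ω => D n ω * (1 - κ * Set.indicator (A n) (fun _ => (1 : ℝ)) ω))
    (c : ℝ)
    (hfreq : ∀ᵐ ω ∂μ,
      Tendsto (fun n : ℕ =>
          (∑ i ∈ Finset.Ico 1 n, Set.indicator (A i) (fun _ => (1 : ℝ)) ω) / n)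
        atTop (nhds c)) :
    ∀ ρ : ℝ, 0 < ρ → ρ < -(c * Real.log (1 - κ)) →
      ∀ᵐ ω ∂μ, Tendsto (fun n : ℕ => Real.exp (n * ρ) * D n ω) atTop (nhds 0) := by
  intro ρ _ hρ
  set L := Real.log (1 - κ)
  have hM := supermartingale_exp_mul_occupationCount A hadapt hDint hA hκ1 hsuper
  have hM0 (n : ℕ) : 0 ≤ᵐ[μ] fun ω => Real.exp (-L * occupationCount A n ω) * D n ω :=
    ae_of_all _ fun ω => mul_nonneg (Real.exp_nonneg _) (hD0 n ω)
  filter_upwards [hM.exists_ae_tendsto_of_nonneg hM0, hfreq] with ω ⟨l, hl⟩ hω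
  have hexponent : Tendsto (fun n : ℕ => n * ρ + L * occupationCount A n ω) atTop atBot :=
    tendsto_natCast_mul_add_atBot_of_tendsto_div (tendsto_occupationCount_div A hω) (by linarith)
  have hdecay := hl.mul (Real.tendsto_exp_atBot.comp hexponent)
  rw [mul_zero] at hdecay
  refine hdecay.congr fun n => ?_
  have hinv :
      Real.exp (-L * occupationCount A n ω) * Real.exp (L * occupationCount A n ω) = 1 := by
    rw [← Real.exp_add, neg_mul, neg_add_cancel, Real.exp_zero]
  rw [Function.comp_apply, Real.exp_add]
  linear_combination (Real.exp (n * ρ) * D n ω) * hinv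

/-- Supermartingale argument: if a nonnegative adapted integrable process `D` satisfies
`E[D_{n+1} | 𝓕_n] ≤ D_n (1 - κ 1_{A_n})` with `0 < κ < 1`, `A_n ∈ 𝓕_n`, and the events
`A_n` have a.s. limiting frequency `c > 0`, then `e^{nρ} D_n → 0` a.s. for every
`0 < ρ < -c log(1-κ)`. -/
theorem exp_decay_of_supermartingale
    {Ω : Type*} {m : MeasurableSpace Ω} (μ : Measure Ω) [IsProbabilityMeasure μ]
    (ℱ : Filtration ℕ m) (D : ℕ → Ω → ℝ)
    (hadapt : StronglyAdapted ℱ D) (hD0 : ∀ n ω, 0 ≤ D n ω)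
    (hDint : ∀ n, Integrable (D n) μ)
    (A : ℕ → Set Ω) (hA : ∀ n, MeasurableSet[ℱ n] (A n))
    (κ : ℝ) (hκ0 : 0 < κ) (hκ1 : κ < 1)
    (hsuper : ∀ n, μ[D (n + 1) | ℱ n]
        ≤ᵐ[μ] fun ω => D n ω * (1 - κ * Set.indicator (A n) (fun _ => (1 : ℝ)) ω))
    (c : ℝ) (hc : 0 < c)
    (hfreq : ∀ᵐ ω ∂μ,
      Tendsto (fun n : ℕ =>
          (∑ i ∈ Finset.Ico 1 n, Set.indicator (A i) (fun _ => (1 : ℝ)) ω) / n)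
        atTop (nhds c)) :
    ∀ ρ : ℝ, 0 < ρ → ρ < -(c * Real.log (1 - κ)) →
      ∀ᵐ ω ∂μ, Tendsto (fun n : ℕ => Real.exp (n * ρ) * D n ω) atTop (nhds 0) :=
  exp_decay_of_supermartingale_general μ ℱ D hadapt hD0 hDint A hA κ hκ1 hsuper c hfreq
end
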